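/- arXiv:1910.10607 — 2 statements merged into one kernel-verified Lean document; each statement's English description precedes it below -/
import Mathlib

section
/- With the flat-shock states as above, the downstream flow is subsonic: $u_0^+ < \sqrt{\gamma p_0^+/\rho_0^+}$. -/
theorem flat_shock_downstream_subsonic
    (γ um ρm pm uP ρP pP : ℝ)
    (hγ : 1 < γ) (hum : 0 < um) (hρm : 0 < ρm) (hpm : 0 < pm)
    (hsup : Real.sqrt (γ * pm / ρm) < um)
    (huP : uP = 2 * (γ - 1) / ((γ + 1) * um) * (um ^ 2 / 2 + γ * pm / ((γ - 1) * ρm)))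
    (hρP : ρP = ρm * um / uP)
    (hpP : pP = ρm * um ^ 2 + pm - ρP * uP ^ 2) :
    uP < Real.sqrt (γ * pP / ρP) := by
  have hnn : (0:ℝ) ≤ γ * pm / ρm := by positivity
  have hc : γ * pm / ρm < um ^ 2 := by
    nlinarith [Real.sq_sqrt hnn, Real.sqrt_nonneg (γ * pm / ρm)]
  have hγ1 : (0:ℝ) < γ + 1 := by linarith
  have hγm : (0:ℝ) < γ - 1 := by linarith
  have huPpos : 0 < uP := by
    rw [huP]; positivity
  have hρPpos : 0 < ρP := by rw [hρP]; positivity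
  -- key: (γ+1) uP ρm um = (γ-1) ρm um² + 2 γ pm
  have hkey : (γ + 1) * uP * (ρm * um) = (γ - 1) * (ρm * um ^ 2) + 2 * γ * pm := by
    rw [huP]; field_simp
  have hcm : γ * pm < ρm * um ^ 2 := by
    have := (div_lt_iff₀ hρm).mp hc
    nlinarith
  -- (γ+1) uP < γ um + γ pm/(ρm um) scaled: (γ+1) uP ρm um < γ ρm um² + γ pm
  have hlt : (γ + 1) * uP * (ρm * um) < γ * (ρm * um ^ 2) + γ * pm := by
    nlinarith
  have hρPval : ρP = ρm * um / uP := hρP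
  have hpPval : pP = ρm * um ^ 2 + pm - (ρm * um / uP) * uP ^ 2 := by rw [hpP, hρP]
  have huPne : uP ≠ 0 := ne_of_gt huPpos
  have hcancel : ρm * um / uP * uP ^ 2 = ρm * um * uP := by
    field_simp
  have hsq : uP ^ 2 * (ρm * um / uP) = ρm * um * uP := by
    field_simp
  have h2 : uP ^ 2 < γ * pP / ρP := by
    rw [hpPval, hρPval, hcancel, lt_div_iff₀ (by positivity), hsq]
    nlinarith
  calc uP = Real.sqrt (uP ^ 2) := by rw [Real.sqrt_sq huPpos.le]
    _ < Real.sqrt (γ * pP / ρP) := Real.sqrt_lt_sqrt (by positivity) h2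
end

section
/- Let $\gamma > 1$ and let positive reals satisfy the supersonic condition $(u_0^-)^2 > \gamma p_0^- /\rho_0^-$. Then the downstream entropy exceeds the upstream entropy: $S_0^+ := p_0^+/(\rho_0^+)^\gamma > p_0^- /(\rho_0^-)^\gamma =: S_0^-$, where $(u_0^+,\rho_0^+,p_0^+)$ is the flat-shock downstream state. -/
/-!
Put `x = ρ₀⁻ (u₀⁻)² / (γ p₀⁻)`, the squared upstream Mach number. The shock relations give the
density and pressure ratios `r(x) = (γ+1)x / ((γ-1)x + 2)` and `P(x) = (2γx - γ + 1) / (γ+1)`, so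
`S₀⁺ / S₀⁻ = P(x) / r(x)^γ`. Up to an additive constant, `log (P / r^γ)` is
`log (2γx - γ + 1) + γ log ((γ-1)x + 2) - γ log x`, whose derivative
`2γ(γ-1)(x-1)² / ((2γx - γ + 1)((γ-1)x + 2)x)` is positive except at the sonic point `x = 1`,
where `P / r^γ = 1`. Hence `P / r^γ > 1` in the supersonic range `x > 1`.
-/

open Real Set

noncomputable def shockEntropyLog (γ y : ℝ) : ℝ :=
  log (2 * γ * y - γ + 1) + γ * log ((γ - 1) * y + 2) - γ * log y

theorem hasDerivAt_shockEntropyLog {γ y : ℝ} (hy : 0 < y) (hA : 0 < 2 * γ * y - γ + 1)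
    (hC : 0 < (γ - 1) * y + 2) :
    HasDerivAt (shockEntropyLog γ)
      (2 * γ * (γ - 1) * (y - 1) ^ 2 / ((2 * γ * y - γ + 1) * ((γ - 1) * y + 2) * y)) y := by
  have hlogA : HasDerivAt (fun y => log (2 * γ * y - γ + 1)) (2 * γ / (2 * γ * y - γ + 1)) y := by
    have := (((hasDerivAt_id y).const_mul (2 * γ)).sub_const γ).add_const 1
    simpa using this.log hA.ne'
  have hlogC : HasDerivAt (fun y => log ((γ - 1) * y + 2)) ((γ - 1) / ((γ - 1) * y + 2)) y := by
    have := ((hasDerivAt_id y).const_mul (γ - 1)).add_const 2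
    simpa using this.log hC.ne'
  refine ((hlogA.add (hlogC.const_mul γ)).sub ((hasDerivAt_log hy.ne').const_mul γ)).congr_deriv ?_
  rw [mul_div_assoc', ← div_eq_mul_inv, div_add_div _ _ hA.ne' hC.ne',
    div_sub_div _ _ (by positivity) hy.ne', div_eq_div_iff (by positivity) (by positivity)]
  ring

theorem strictMonoOn_shockEntropyLog {γ : ℝ} (hγ : 1 < γ) :
    StrictMonoOn (shockEntropyLog γ) (Ici 1) := by
  have hpos : ∀ y ∈ Ici (1 : ℝ), 0 < y ∧ 0 < 2 * γ * y - γ + 1 ∧ 0 < (γ - 1) * y + 2 :=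
    fun y (hy : 1 ≤ y) => ⟨by linarith, by nlinarith, by nlinarith⟩
  apply strictMonoOn_of_deriv_pos (convex_Ici 1)
  · intro y hy
    obtain ⟨hy0, hA, hC⟩ := hpos y hy
    exact (hasDerivAt_shockEntropyLog hy0 hA hC).continuousAt.continuousWithinAt
  · intro y hy
    rw [interior_Ici] at hy
    obtain ⟨hy0, hA, hC⟩ := hpos y (mem_Ici.mpr hy.le)
    rw [(hasDerivAt_shockEntropyLog hy0 hA hC).deriv]
    have hy1 : 0 < (y - 1) ^ 2 := pow_pos (sub_pos.mpr hy) 2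
    have hγγ : 0 < 2 * γ * (γ - 1) := by nlinarith
    positivity

theorem shockEntropyLog_one (γ : ℝ) : shockEntropyLog γ 1 = (γ + 1) * log (γ + 1) := by
  simp only [shockEntropyLog, log_one]
  ring_nf

theorem shock_density_ratio_rpow_lt_pressure_ratio {γ x : ℝ} (hγ : 1 < γ) (hx : 1 < x) :
    ((γ + 1) * x / ((γ - 1) * x + 2)) ^ γ < (2 * γ * x - γ + 1) / (γ + 1) := by
  have hγ1 : 0 < γ + 1 := by linarith
  have hx0 : 0 < x := by linarith
  have hA : 0 < 2 * γ * x - γ + 1 := by nlinarith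
  have hC : 0 < (γ - 1) * x + 2 := by nlinarith
  have hr : 0 < (γ + 1) * x / ((γ - 1) * x + 2) := by positivity
  have hmono := strictMonoOn_shockEntropyLog hγ self_mem_Ici hx.le hx
  rw [← log_lt_log_iff (rpow_pos_of_pos hr γ) (by positivity), log_rpow hr,
    log_div (by positivity) hC.ne', log_mul hγ1.ne' hx0.ne', log_div hA.ne' hγ1.ne']
  rw [shockEntropyLog_one] at hmono
  simp only [shockEntropyLog] at hmono
  linarith

theorem flatShock_density_pressure_eq {γ um ρm pm uP ρP pP x : ℝ} (hγ : 1 < γ) (hum : 0 < um)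
    (hρm : 0 < ρm) (hpm : 0 < pm) (hx : x = ρm * um ^ 2 / (γ * pm))
    (huP : uP = 2 * (γ - 1) / ((γ + 1) * um) * (um ^ 2 / 2 + γ * pm / ((γ - 1) * ρm)))
    (hρP : ρP = ρm * um / uP)
    (hpP : pP = ρm * um ^ 2 + pm - ρP * uP ^ 2) :
    ρP = ρm * ((γ + 1) * x / ((γ - 1) * x + 2)) ∧
      pP = pm * ((2 * γ * x - γ + 1) / (γ + 1)) := by
  have hγ0 : 0 < γ - 1 := by linarith
  have hx0 : 0 < x := by rw [hx]; positivity
  have huP' : uP = um * ((γ - 1) * x + 2) / ((γ + 1) * x) := by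
    rw [huP, hx]
    field_simp
  have hρP' : ρP = ρm * ((γ + 1) * x / ((γ - 1) * x + 2)) := by
    rw [hρP, huP']
    field_simp
  refine ⟨hρP', ?_⟩
  rw [hpP, hρP', huP', hx]
  field_simp
  ring

theorem flat_shock_entropy_increase
    (γ um ρm pm uP ρP pP : ℝ)
    (hγ : 1 < γ) (hum : 0 < um) (hρm : 0 < ρm) (hpm : 0 < pm)
    (hsup : γ * pm / ρm < um ^ 2)
    (huP : uP = 2 * (γ - 1) / ((γ + 1) * um) * (um ^ 2 / 2 + γ * pm / ((γ - 1) * ρm)))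
    (hρP : ρP = ρm * um / uP)
    (hpP : pP = ρm * um ^ 2 + pm - ρP * uP ^ 2) :
    pm / ρm ^ γ < pP / ρP ^ γ := by
  set x := ρm * um ^ 2 / (γ * pm) with hx
  have hmach : 1 < x := by
    rw [hx, one_lt_div (by positivity)]
    rw [div_lt_iff₀ hρm] at hsup
    linarith
  obtain ⟨hρP', hpP'⟩ := flatShock_density_pressure_eq hγ hum hρm hpm hx huP hρP hpP
  have hr : 0 < (γ + 1) * x / ((γ - 1) * x + 2) := by
    have : 0 < γ - 1 := by linarith
    positivity
  have hlt := shock_density_ratio_rpow_lt_pressure_ratio hγ hmach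
  rw [hρP', hpP', mul_rpow hρm.le hr.le, mul_div_mul_comm]
  exact lt_mul_of_one_lt_right (by positivity) ((one_lt_div (rpow_pos_of_pos hr γ)).mpr hlt)
end
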